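/- Let X_1, X_2 be i.i.d. with density α x^{-α-1}·1{x ≥ 1} and a_n^α = n^γ log n with γ > 0. Then P(X_1 X_2 > a_n) is asymptotically γ/n^γ as n → ∞. -/

import Mathlib

/-!
Conditioning on `X₁ = x`, the event `X₁ X₂ > a` has probability
`P(X₂ > a / x) = max (a / x) 1 ^ (-α)`. Integrating against the Pareto density gives, for
`a ≥ 1`, the exact tail `P(X₁ X₂ > a) = a ^ (-α) (α log a + 1)`: the range `1 < x ≤ a`
contributes `α a ^ (-α) log a` and `x > a` contributes `a ^ (-α)`. At `a = aₙ` this equals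
`n ^ (-γ) (γ + (log log n + 1) / log n)`.
-/

open MeasureTheory Filter Real Set

noncomputable def paretoMeasure (α : ℝ) : Measure ℝ :=
  MeasureTheory.volume.withDensity
    (fun x => ENNReal.ofReal (if 1 ≤ x then α * x ^ (-α - 1) else 0))

noncomputable def aSeq (α γ : ℝ) (n : ℕ) : ℝ := ((n : ℝ) ^ γ * Real.log n) ^ (1/α)

lemma paretoMeasure_eq_withDensity_restrict (α : ℝ) :
    paretoMeasure α =
      (volume.restrict (Ioi 1)).withDensity fun x => ENNReal.ofReal (α * x ^ (-α - 1)) := by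
  rw [Measure.restrict_congr_set Ioi_ae_eq_Ici, ← withDensity_indicator measurableSet_Ici,
    paretoMeasure]
  congr 1
  ext x
  by_cases hx : 1 ≤ x <;> simp [hx]

instance (α : ℝ) : SFinite (paretoMeasure α) := by
  rw [paretoMeasure_eq_withDensity_restrict]; infer_instance

lemma paretoMeasure_apply (α : ℝ) (s : Set ℝ) :
    paretoMeasure α s = ∫⁻ x in s ∩ Ioi 1, ENNReal.ofReal (α * x ^ (-α - 1)) := by
  rw [paretoMeasure_eq_withDensity_restrict, withDensity_apply' _ s,
    Measure.restrict_restrict' measurableSet_Ioi]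

lemma lintegral_Ioi_mul_rpow_neg_sub_one {α t : ℝ} (hα : 0 < α) (ht : 0 < t) :
    ∫⁻ x in Ioi t, ENNReal.ofReal (α * x ^ (-α - 1)) = ENNReal.ofReal (t ^ (-α)) := by
  have hint : IntegrableOn (fun x : ℝ => α * x ^ (-α - 1)) (Ioi t) :=
    (integrableOn_Ioi_rpow_of_lt (by linarith) ht).const_mul α
  have hnn : 0 ≤ᵐ[volume.restrict (Ioi t)] fun x : ℝ => α * x ^ (-α - 1) := by
    filter_upwards [ae_restrict_mem measurableSet_Ioi] with x (hx : t < x)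
    have : 0 < x := ht.trans hx
    positivity
  rw [← ofReal_integral_eq_lintegral_ofReal hint hnn, integral_const_mul,
    integral_Ioi_rpow_of_lt (by linarith) ht, sub_add_cancel]
  congr 1
  field_simp

lemma paretoMeasure_Ioi {α : ℝ} (hα : 0 < α) (t : ℝ) :
    paretoMeasure α (Ioi t) = ENNReal.ofReal (max t 1 ^ (-α)) := by
  rw [paretoMeasure_apply, Ioi_inter_Ioi,
    lintegral_Ioi_mul_rpow_neg_sub_one hα (zero_lt_one.trans_le (le_max_right t 1))]

lemma ae_one_lt_paretoMeasure (α : ℝ) : ∀ᵐ x ∂paretoMeasure α, 1 < x := by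
  rw [ae_iff, paretoMeasure_apply, show {x : ℝ | ¬1 < x} ∩ Ioi 1 = ∅ by ext; simp]
  simp

lemma lintegral_Ioc_one_ofReal_div {c a : ℝ} (hc : 0 ≤ c) (ha : 1 ≤ a) :
    ∫⁻ x in Ioc 1 a, ENNReal.ofReal (c / x) = ENNReal.ofReal (c * log a) := by
  have hint : IntegrableOn (fun x : ℝ => c / x) (Ioc 1 a) := by
    refine (ContinuousOn.integrableOn_Icc ?_).mono_set Ioc_subset_Icc_self
    exact continuousOn_const.div continuousOn_id fun x hx => (zero_lt_one.trans_le hx.1).ne'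
  have hnn : 0 ≤ᵐ[volume.restrict (Ioc 1 a)] fun x : ℝ => c / x := by
    filter_upwards [ae_restrict_mem measurableSet_Ioc] with x hx
    have : 0 < x := zero_lt_one.trans hx.1
    positivity
  rw [← ofReal_integral_eq_lintegral_ofReal hint hnn, ← intervalIntegral.integral_of_le ha]
  simp only [div_eq_mul_inv, intervalIntegral.integral_const_mul]
  rw [integral_inv_of_pos one_pos (by linarith), div_one]

lemma paretoMeasure_prod_mul_gt {α a : ℝ} (hα : 0 < α) (ha : 1 ≤ a) :
    (paretoMeasure α).prod (paretoMeasure α) {p : ℝ × ℝ | p.1 * p.2 > a} =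
      ENNReal.ofReal (a ^ (-α) * (α * log a + 1)) := by
  have ha₀ : 0 < a := zero_lt_one.trans_le ha
  have hS : MeasurableSet {p : ℝ × ℝ | p.1 * p.2 > a} :=
    measurableSet_lt measurable_const (measurable_fst.mul measurable_snd)
  have h_slice : ∀ᵐ x ∂paretoMeasure α,
      paretoMeasure α (Prod.mk x ⁻¹' {p | p.1 * p.2 > a}) =
        ENNReal.ofReal (max (a / x) 1 ^ (-α)) := by
    filter_upwards [ae_one_lt_paretoMeasure α] with x hx
    have h_pre : Prod.mk x ⁻¹' {p : ℝ × ℝ | p.1 * p.2 > a} = Ioi (a / x) := by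
      ext y
      simp [div_lt_iff₀ (zero_lt_one.trans hx), mul_comm]
    rw [h_pre, paretoMeasure_Ioi hα]
  rw [Measure.prod_apply hS, lintegral_congr_ae h_slice, paretoMeasure_eq_withDensity_restrict,
    lintegral_withDensity_eq_lintegral_mul _ (by fun_prop) (by fun_prop),
    ← Ioc_union_Ioi_eq_Ioi ha, lintegral_union measurableSet_Ioi (Ioc_disjoint_Ioi le_rfl)]
  simp only [Pi.mul_apply]
  have h_near : ∫⁻ x in Ioc 1 a,
      ENNReal.ofReal (α * x ^ (-α - 1)) * ENNReal.ofReal (max (a / x) 1 ^ (-α)) =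
        ENNReal.ofReal (α * a ^ (-α) * log a) := by
    rw [← lintegral_Ioc_one_ofReal_div (by positivity) ha]
    refine setLIntegral_congr_fun measurableSet_Ioc fun x hx => ?_
    have hx₀ : 0 < x := zero_lt_one.trans hx.1
    rw [max_eq_left ((one_le_div hx₀).2 hx.2), ← ENNReal.ofReal_mul (by positivity),
      div_rpow ha₀.le hx₀.le, rpow_sub_one hx₀.ne', rpow_neg hx₀.le, rpow_neg ha₀.le]
    congr 1
    field_simp
  have h_far : ∫⁻ x in Ioi a,
      ENNReal.ofReal (α * x ^ (-α - 1)) * ENNReal.ofReal (max (a / x) 1 ^ (-α)) =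
        ENNReal.ofReal (a ^ (-α)) := by
    rw [← lintegral_Ioi_mul_rpow_neg_sub_one hα ha₀]
    refine setLIntegral_congr_fun measurableSet_Ioi fun x (hx : a < x) => ?_
    rw [max_eq_right ((div_le_one (ha₀.trans hx)).2 hx.le), one_rpow,
      ENNReal.ofReal_one, mul_one]
  rw [h_near, h_far, ← ENNReal.ofReal_add (by positivity [log_nonneg ha]) (by positivity)]
  ring_nf

lemma one_le_aSeq {α γ : ℝ} (hα : 0 < α) (hγ : 0 ≤ γ) {n : ℕ} (hn : 3 ≤ n) :
    1 ≤ aSeq α γ n := by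
  have hn' : (3 : ℝ) ≤ n := by exact_mod_cast hn
  have h_log : 1 ≤ log n := by
    rw [le_log_iff_exp_le (by linarith)]
    linarith [exp_one_lt_d9]
  exact one_le_rpow (one_le_mul_of_one_le_of_one_le (one_le_rpow (by linarith) hγ) h_log)
    (by positivity)

lemma natCast_rpow_mul_tail_aSeq {α γ : ℝ} (hα : 0 < α) {n : ℕ} (hn : 1 < n) :
    (n : ℝ) ^ γ * (aSeq α γ n ^ (-α) * (α * log (aSeq α γ n) + 1)) =
      γ + (log (log n) + 1) / log n := by
  have hn₀ : (0 : ℝ) < n := by positivity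
  have h_log : 0 < log n := log_pos (by exact_mod_cast hn)
  have h_base : 0 < (n : ℝ) ^ γ * log n := by positivity
  have h_pow : aSeq α γ n ^ (-α) = ((n : ℝ) ^ γ * log n)⁻¹ := by
    rw [aSeq, ← rpow_mul h_base.le, show 1 / α * -α = -1 by field_simp, rpow_neg_one]
  have h_log_aSeq : α * log (aSeq α γ n) = γ * log n + log (log n) := by
    rw [aSeq, log_rpow h_base, log_mul (by positivity) h_log.ne', log_rpow hn₀]
    field_simp
  rw [h_pow, h_log_aSeq]
  field_simp
  ring

lemma tendsto_log_log_add_one_div_log :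
    Tendsto (fun x : ℝ => (log (log x) + 1) / log x) atTop (nhds 0) := by
  have h := (isLittleO_log_id_atTop.tendsto_div_nhds_zero.add
    tendsto_inv_atTop_zero).comp tendsto_log_atTop
  simpa [add_div, Function.comp_def] using h

theorem stmt5 (α γ : ℝ) (hα : 0 < α) (hγ : 0 < γ) :
    Tendsto (fun n : ℕ =>
      (n : ℝ) ^ γ *
        (((paretoMeasure α).prod (paretoMeasure α))
          {p : ℝ × ℝ | p.1 * p.2 > aSeq α γ n}).toReal) atTop (nhds γ) := by
  have h_eq : ∀ᶠ n : ℕ in atTop, γ + (log (log n) + 1) / log n =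
      (n : ℝ) ^ γ * (((paretoMeasure α).prod (paretoMeasure α))
        {p : ℝ × ℝ | p.1 * p.2 > aSeq α γ n}).toReal := by
    filter_upwards [eventually_ge_atTop 3] with n hn
    have ha := one_le_aSeq hα hγ.le hn
    rw [paretoMeasure_prod_mul_gt hα ha, ENNReal.toReal_ofReal (by positivity [log_nonneg ha]),
      natCast_rpow_mul_tail_aSeq hα (by omega)]
  refine Tendsto.congr' h_eq ?_
  simpa using
    tendsto_const_nhds.add (tendsto_log_log_add_one_div_log.comp tendsto_natCast_atTop_atTop)
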